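/- Let (ψ₁, ψ₂), (Ψ₁, Ψ₂) solve the Dirac equation with potential U, and define Ω₁(z) = ∫^z [ψ₂ conj(Ψ₁) dz' + ψ₁ conj(Ψ₂) dz̄'] and Ω₂(z) = ∫^z [ψ₂ Ψ₂ dz' - ψ₁ Ψ₁ dz̄'] (well-defined up to constants since the integrands are closed). Then δψ₁ = Ω₁ Ψ₁ - Ω₂ conj(Ψ₂), δψ₂ = Ω₁ Ψ₂ + Ω₂ conj(Ψ₁) solves the linearized Dirac equation ∂_z(δψ₁) = U δψ₂ + δU ψ₂, ∂_{z̄}(δψ₂) = -U δψ₁ - δU ψ₁ with δU = Ψ₁ conj(Ψ₁) - Ψ₂ conj(Ψ₂). -/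

import Mathlib

/-! By the Leibniz rule, the terms of `∂_z δψ₁` and `∂_z̄ δψ₂` in which `Ψ` is differentiated
combine to `U δψ` through the Dirac equation for `Ψ` and for its partner `(Ψ̄₂, -Ψ̄₁)`, while
the terms in which `Ω` is differentiated produce `δU ψ`. -/

open Complex

/-- Wirtinger derivative `∂_z f = (∂_x f - i ∂_y f)/2`. -/
noncomputable def wdz (f : ℂ → ℂ) (z : ℂ) : ℂ :=
  (fderiv ℝ f z 1 - Complex.I * fderiv ℝ f z Complex.I) / 2

/-- Wirtinger derivative `∂_z̄ f = (∂_x f + i ∂_y f)/2`. -/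
noncomputable def wdzbar (f : ℂ → ℂ) (z : ℂ) : ℂ :=
  (fderiv ℝ f z 1 + Complex.I * fderiv ℝ f z Complex.I) / 2

section Wirtinger

variable {f g : ℂ → ℂ} {z : ℂ}

lemma wdz_mul (hf : DifferentiableAt ℝ f z) (hg : DifferentiableAt ℝ g z) :
    wdz (fun w => f w * g w) z = wdz f z * g z + f z * wdz g z := by
  simp only [wdz, fderiv_fun_mul hf hg, add_apply,
    smul_apply, smul_eq_mul]
  ring

lemma wdzbar_mul (hf : DifferentiableAt ℝ f z) (hg : DifferentiableAt ℝ g z) :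
    wdzbar (fun w => f w * g w) z = wdzbar f z * g z + f z * wdzbar g z := by
  simp only [wdzbar, fderiv_fun_mul hf hg, add_apply,
    smul_apply, smul_eq_mul]
  ring

lemma wdz_sub (hf : DifferentiableAt ℝ f z) (hg : DifferentiableAt ℝ g z) :
    wdz (fun w => f w - g w) z = wdz f z - wdz g z := by
  simp only [wdz, fderiv_fun_sub hf hg, sub_apply]
  ring

lemma wdzbar_add (hf : DifferentiableAt ℝ f z) (hg : DifferentiableAt ℝ g z) :
    wdzbar (fun w => f w + g w) z = wdzbar f z + wdzbar g z := by
  simp only [wdzbar, fderiv_fun_add hf hg, add_apply]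
  ring

end Wirtinger

theorem stmt17_general (U : ℂ → ℝ) (ψ₁ ψ₂ Ψ₁ Ψ₂ Ω₁ Ω₂ : ℂ → ℂ)
    (hΨ1 : Differentiable ℝ Ψ₁) (hΨ2 : Differentiable ℝ Ψ₂)
    (hΩ1 : Differentiable ℝ Ω₁) (hΩ2 : Differentiable ℝ Ω₂)
    (hdΨ1 : ∀ z, wdz Ψ₁ z = (U z : ℂ) * Ψ₂ z)
    (hdΨ2 : ∀ z, wdzbar Ψ₂ z = -(U z : ℂ) * Ψ₁ z)
    (hcΨ2 : ∀ z, wdz (fun w => starRingEnd ℂ (Ψ₂ w)) z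
      = -(U z : ℂ) * starRingEnd ℂ (Ψ₁ z))
    (hcΨ1 : ∀ z, wdzbar (fun w => starRingEnd ℂ (Ψ₁ w)) z
      = (U z : ℂ) * starRingEnd ℂ (Ψ₂ z))
    (hΩ1z : ∀ z, wdz Ω₁ z = ψ₂ z * starRingEnd ℂ (Ψ₁ z))
    (hΩ1zb : ∀ z, wdzbar Ω₁ z = ψ₁ z * starRingEnd ℂ (Ψ₂ z))
    (hΩ2z : ∀ z, wdz Ω₂ z = ψ₂ z * Ψ₂ z)
    (hΩ2zb : ∀ z, wdzbar Ω₂ z = -(ψ₁ z * Ψ₁ z))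
    (δψ₁ δψ₂ δU : ℂ → ℂ)
    (hδ1 : ∀ z, δψ₁ z = Ω₁ z * Ψ₁ z - Ω₂ z * starRingEnd ℂ (Ψ₂ z))
    (hδ2 : ∀ z, δψ₂ z = Ω₁ z * Ψ₂ z + Ω₂ z * starRingEnd ℂ (Ψ₁ z))
    (hδU : ∀ z, δU z = Ψ₁ z * starRingEnd ℂ (Ψ₁ z) - Ψ₂ z * starRingEnd ℂ (Ψ₂ z)) :
    (∀ z, wdz δψ₁ z = (U z : ℂ) * δψ₂ z + δU z * ψ₂ z) ∧
    (∀ z, wdzbar δψ₂ z = -(U z : ℂ) * δψ₁ z - δU z * ψ₁ z) := by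
  have hcΨ1d : Differentiable ℝ (fun w => starRingEnd ℂ (Ψ₁ w)) :=
    conjCLE.differentiable.comp hΨ1
  have hcΨ2d : Differentiable ℝ (fun w => starRingEnd ℂ (Ψ₂ w)) :=
    conjCLE.differentiable.comp hΨ2
  refine ⟨fun z => ?_, fun z => ?_⟩
  · rw [funext hδ1, wdz_sub ((hΩ1 z).fun_mul (hΨ1 z)) ((hΩ2 z).fun_mul (hcΨ2d z)),
      wdz_mul (hΩ1 z) (hΨ1 z), wdz_mul (hΩ2 z) (hcΨ2d z),
      hΩ1z, hΩ2z, hdΨ1, hcΨ2, hδ2, hδU]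
    ring
  · rw [funext hδ2, wdzbar_add ((hΩ1 z).fun_mul (hΨ2 z)) ((hΩ2 z).fun_mul (hcΨ1d z)),
      wdzbar_mul (hΩ1 z) (hΨ2 z), wdzbar_mul (hΩ2 z) (hcΨ1d z),
      hΩ1zb, hΩ2zb, hdΨ2, hcΨ1, hδ1, hδU]
    ring

/-- The Darboux-type deformation `δψ = Ω₁ Ψ - Ω₂ Ψ⁺` of a solution of the Dirac
equation solves the linearized Dirac equation with `δU = |Ψ₁|² - |Ψ₂|²`. -/
theorem stmt17 (U : ℂ → ℝ) (ψ₁ ψ₂ Ψ₁ Ψ₂ Ω₁ Ω₂ : ℂ → ℂ)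
    (hψ1 : Differentiable ℝ ψ₁) (hψ2 : Differentiable ℝ ψ₂)
    (hΨ1 : Differentiable ℝ Ψ₁) (hΨ2 : Differentiable ℝ Ψ₂)
    (hΩ1 : Differentiable ℝ Ω₁) (hΩ2 : Differentiable ℝ Ω₂)
    (hdψ1 : ∀ z, wdz ψ₁ z = (U z : ℂ) * ψ₂ z)
    (hdψ2 : ∀ z, wdzbar ψ₂ z = -(U z : ℂ) * ψ₁ z)
    (hdΨ1 : ∀ z, wdz Ψ₁ z = (U z : ℂ) * Ψ₂ z)
    (hdΨ2 : ∀ z, wdzbar Ψ₂ z = -(U z : ℂ) * Ψ₁ z)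
    (hcΨ2 : ∀ z, wdz (fun w => starRingEnd ℂ (Ψ₂ w)) z
      = -(U z : ℂ) * starRingEnd ℂ (Ψ₁ z))
    (hcΨ1 : ∀ z, wdzbar (fun w => starRingEnd ℂ (Ψ₁ w)) z
      = (U z : ℂ) * starRingEnd ℂ (Ψ₂ z))
    (hΩ1z : ∀ z, wdz Ω₁ z = ψ₂ z * starRingEnd ℂ (Ψ₁ z))
    (hΩ1zb : ∀ z, wdzbar Ω₁ z = ψ₁ z * starRingEnd ℂ (Ψ₂ z))
    (hΩ2z : ∀ z, wdz Ω₂ z = ψ₂ z * Ψ₂ z)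
    (hΩ2zb : ∀ z, wdzbar Ω₂ z = -(ψ₁ z * Ψ₁ z))
    (δψ₁ δψ₂ δU : ℂ → ℂ)
    (hδ1 : ∀ z, δψ₁ z = Ω₁ z * Ψ₁ z - Ω₂ z * starRingEnd ℂ (Ψ₂ z))
    (hδ2 : ∀ z, δψ₂ z = Ω₁ z * Ψ₂ z + Ω₂ z * starRingEnd ℂ (Ψ₁ z))
    (hδU : ∀ z, δU z = Ψ₁ z * starRingEnd ℂ (Ψ₁ z) - Ψ₂ z * starRingEnd ℂ (Ψ₂ z)) :
    (∀ z, wdz δψ₁ z = (U z : ℂ) * δψ₂ z + δU z * ψ₂ z) ∧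
    (∀ z, wdzbar δψ₂ z = -(U z : ℂ) * δψ₁ z - δU z * ψ₁ z) :=
  stmt17_general U ψ₁ ψ₂ Ψ₁ Ψ₂ Ω₁ Ω₂ hΨ1 hΨ2 hΩ1 hΩ2 hdΨ1 hdΨ2 hcΨ2 hcΨ1 hΩ1z hΩ1zb hΩ2z hΩ2zb δψ₁
    δψ₂ δU hδ1 hδ2 hδU
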